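/- arXiv:2411.19376 — 6 statements merged into one kernel-verified Lean document; each statement's English description precedes it below -/
import Mathlib

section
/- Let v_e > 0, v_p ≥ 0, ω_e > 0, ρ > 0, and let ξ = (ρ sin θ_ξ, ρ cos θ_ξ) be a point on the circle of radius ρ. Then for every u_e ∈ [-1,1], min over u_p ∈ ℝ of f(ξ, u_e, u_p)ᵀξ equals -ρ·v_p - ρ·cos(θ_ξ)·v_e, and the minimum is attained at u_p = π + θ_ξ. In particular this minimum is strictly positive if and only if cos θ_ξ < -v_p/v_e, i.e., y < -ρ·v_p/v_e (characterization of the usable part). -/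
open Real

theorem stmt1 (v_e v_p ω_e ρ θ_ξ u_e : ℝ)
    (hve : 0 < v_e) (hvp : 0 ≤ v_p) (hω : 0 < ω_e) (hρ : 0 < ρ)
    (hue : u_e ∈ Set.Icc (-1 : ℝ) 1) :
    let x := ρ * Real.sin θ_ξ
    let y := ρ * Real.cos θ_ξ
    IsLeast {r : ℝ | ∃ u_p : ℝ,
        r = (-ω_e * y * u_e + v_p * Real.sin u_p) * x
            + (ω_e * x * u_e - v_e + v_p * Real.cos u_p) * y}
      (-ρ * v_p - ρ * Real.cos θ_ξ * v_e)
    ∧ (-ω_e * y * u_e + v_p * Real.sin (Real.pi + θ_ξ)) * x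
        + (ω_e * x * u_e - v_e + v_p * Real.cos (Real.pi + θ_ξ)) * y
        = -ρ * v_p - ρ * Real.cos θ_ξ * v_e
    ∧ (0 < -ρ * v_p - ρ * Real.cos θ_ξ * v_e ↔ Real.cos θ_ξ < -v_p / v_e)
    ∧ (Real.cos θ_ξ < -v_p / v_e ↔ y < -ρ * v_p / v_e) := by
  intro x y
  have key : ∀ u_p : ℝ, (-ω_e * y * u_e + v_p * Real.sin u_p) * x
      + (ω_e * x * u_e - v_e + v_p * Real.cos u_p) * y
      = ρ * (v_p * Real.cos (u_p - θ_ξ)) - ρ * Real.cos θ_ξ * v_e := by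
    intro u_p
    simp only [x, y, Real.cos_sub]
    ring
  have hatt : (-ω_e * y * u_e + v_p * Real.sin (Real.pi + θ_ξ)) * x
      + (ω_e * x * u_e - v_e + v_p * Real.cos (Real.pi + θ_ξ)) * y
      = -ρ * v_p - ρ * Real.cos θ_ξ * v_e := by
    rw [key (Real.pi + θ_ξ)]
    simp [Real.cos_pi]
  refine ⟨⟨⟨Real.pi + θ_ξ, hatt.symm⟩, ?_⟩, hatt, ?_, ?_⟩
  · rintro r ⟨u_p, rfl⟩
    rw [key u_p]
    have h1 := Real.neg_one_le_cos (u_p - θ_ξ)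
    nlinarith [mul_nonneg hρ.le hvp]
  · rw [lt_div_iff₀ hve]
    constructor <;> intro h <;> nlinarith
  · show Real.cos θ_ξ < -v_p / v_e ↔ ρ * Real.cos θ_ξ < -ρ * v_p / v_e
    rw [show -ρ * v_p / v_e = ρ * (-v_p / v_e) by ring, mul_lt_mul_iff_right₀ hρ]
end

section
/- Suppose the evader uses the strategy u_e(t) ∈ -sign(x(t)) and the pursuer uses any measurable strategy u_p(t) ∈ ℝ. Then along any solution ξ(t) = (x(t), y(t)) of the dynamics ẋ = -ω_e·y·u_e + v_p sin u_p, ẏ = ω_e·x·u_e - v_e + v_p cos u_p, the y-component satisfies ẏ(t) = -ω_e·|x(t)| - v_e + v_p cos(u_p(t)) ≤ v_p - v_e for almost all t, hence y(t) - y(0) ≤ t·(v_p - v_e). -/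
open Real

theorem stmt3 (ω_e v_e v_p : ℝ) (x y u_e u_p : ℝ → ℝ)
    (hω : 0 < ω_e) (hvp : 0 ≤ v_p) (hv : v_p < v_e)
    (hsign : ∀ t, (0 < x t → u_e t = -1) ∧ (x t < 0 → u_e t = 1)
      ∧ u_e t ∈ Set.Icc (-1 : ℝ) 1)
    (hdx : ∀ t, HasDerivAt x (-ω_e * y t * u_e t + v_p * Real.sin (u_p t)) t)
    (hdy : ∀ t, HasDerivAt y (ω_e * x t * u_e t - v_e + v_p * Real.cos (u_p t)) t) :
    (∀ t, ω_e * x t * u_e t - v_e + v_p * Real.cos (u_p t)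
        = -ω_e * |x t| - v_e + v_p * Real.cos (u_p t)
      ∧ -ω_e * |x t| - v_e + v_p * Real.cos (u_p t) ≤ v_p - v_e)
    ∧ ∀ t : ℝ, 0 ≤ t → y t - y 0 ≤ t * (v_p - v_e) := by
  have key : ∀ t, x t * u_e t = -|x t| := by
    intro t
    obtain ⟨h1, h2, _⟩ := hsign t
    rcases lt_trichotomy (x t) 0 with h | h | h
    · rw [h2 h, abs_of_neg h]; ring
    · simp [h]
    · rw [h1 h, abs_of_pos h]; ring
  have heq : ∀ t, ω_e * x t * u_e t - v_e + v_p * Real.cos (u_p t)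
      = -ω_e * |x t| - v_e + v_p * Real.cos (u_p t) := by
    intro t
    have := key t
    nlinarith [key t]
  have hle : ∀ t, -ω_e * |x t| - v_e + v_p * Real.cos (u_p t) ≤ v_p - v_e := by
    intro t
    have h1 : 0 ≤ ω_e * |x t| := mul_nonneg hω.le (abs_nonneg _)
    have h2 : v_p * Real.cos (u_p t) ≤ v_p :=
      (mul_le_of_le_one_right hvp (Real.cos_le_one _))
    linarith
  refine ⟨fun t => ⟨heq t, hle t⟩, ?_⟩
  intro t ht
  set g : ℝ → ℝ := fun s => y s - s * (v_p - v_e) with hg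
  have hgd : ∀ s, HasDerivAt g
      ((ω_e * x s * u_e s - v_e + v_p * Real.cos (u_p s)) - (v_p - v_e)) s := by
    intro s
    exact (hdy s).sub (hasDerivAt_mul_const (v_p - v_e))
  have hdiff : Differentiable ℝ g := fun s => (hgd s).differentiableAt
  have hmono : AntitoneOn g (Set.univ : Set ℝ) := by
    apply antitoneOn_of_deriv_nonpos convex_univ hdiff.continuous.continuousOn
      (fun s _ => (hdiff s).differentiableWithinAt)
    intro s _
    rw [(hgd s).deriv]
    have h1 := hle s
    have h2 := heq s
    linarith
  have := hmono (Set.mem_univ 0) (Set.mem_univ t) ht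
  simp only [hg] at this
  linarith [this]
end

section
/- Suppose ξ(τ) = (x(τ), y(τ)) and p(τ) = (p_x(τ), p_y(τ)) are continuously differentiable and satisfy the backward-time dynamics ẋ = -(-ω_e·y·u_e + v_p sin u_p), ẏ = -(ω_e·x·u_e - v_e + v_p cos u_p) and the backward adjoint equation ṗ_x = ω_e·u_e·p_y, ṗ_y = -ω_e·u_e·p_x, and that the pursuer's control satisfies (p_x, p_y) = c(τ)·(sin u_p(τ), cos u_p(τ)) for some scalar function c. Then the switching function σ(τ) = p_x(τ)·y(τ) - p_y(τ)·x(τ) satisfies σ'(τ) = p_x(τ)·v_e. -/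
open Real

theorem stmt6 (ω_e v_e v_p : ℝ) (x y p_x p_y u_e u_p c : ℝ → ℝ)
    (hω : 0 < ω_e) (hve : 0 < v_e) (hvp : 0 < v_p)
    (hue : ∀ τ, u_e τ ∈ Set.Icc (-1 : ℝ) 1)
    (hdx : ∀ τ, HasDerivAt x
      (-(-ω_e * y τ * u_e τ + v_p * Real.sin (u_p τ))) τ)
    (hdy : ∀ τ, HasDerivAt y
      (-(ω_e * x τ * u_e τ - v_e + v_p * Real.cos (u_p τ))) τ)
    (hdpx : ∀ τ, HasDerivAt p_x (ω_e * u_e τ * p_y τ) τ)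
    (hdpy : ∀ τ, HasDerivAt p_y (-(ω_e * u_e τ * p_x τ)) τ)
    (halign : ∀ τ, p_x τ = c τ * Real.sin (u_p τ) ∧ p_y τ = c τ * Real.cos (u_p τ)) :
    ∀ τ, HasDerivAt (fun σ => p_x σ * y σ - p_y σ * x σ) (p_x τ * v_e) τ := by
  intro τ
  have h := ((hdpx τ).mul (hdy τ)).sub ((hdpy τ).mul (hdx τ))
  convert h using 1
  case e'_4 => rfl
  case e'_5 => rfl
  case e'_8 => rfl
  obtain ⟨h1, h2⟩ := halign τ
  rw [h1, h2]; ring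
end

section
/- Fix constants ω_e, v_e, v_p, ρ > 0 with v_p < v_e, an angle θ₀ with cos θ₀ < -v_p/v_e, and s ∈ {-1, 1}. Define ξ(τ) = (1/ω_e)·( -s·v_e + s·v_e·cos(τω_e) + ρω_e·sin(θ₀ - sτω_e) + τ·v_p·ω_e·sin(θ₀ - sτω_e), v_e·sin(τω_e) + ρω_e·cos(θ₀ - sτω_e) + τ·v_p·ω_e·cos(θ₀ - sτω_e) ). Then ξ(0) = (ρ sin θ₀, ρ cos θ₀) and ξ satisfies the backward-time ODE ẋ(τ) = -s·ω_e·y(τ) - v_p·sin(π + θ₀ - s·ω_e·τ), ẏ(τ) = s·ω_e·x(τ) + v_e - v_p·cos(π + θ₀ - s·ω_e·τ). -/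
open Real

theorem stmt8 (ω_e v_e v_p ρ θ₀ s : ℝ) (x y : ℝ → ℝ)
    (hω : 0 < ω_e) (hve : 0 < v_e) (hvp : 0 < v_p) (hρ : 0 < ρ)
    (hv : v_p < v_e) (hθ : Real.cos θ₀ < -v_p / v_e) (hs : s = 1 ∨ s = -1)
    (hx : ∀ τ, x τ = (1 / ω_e) * (-s * v_e + s * v_e * Real.cos (τ * ω_e)
      + ρ * ω_e * Real.sin (θ₀ - s * τ * ω_e)
      + τ * v_p * ω_e * Real.sin (θ₀ - s * τ * ω_e)))
    (hy : ∀ τ, y τ = (1 / ω_e) * (v_e * Real.sin (τ * ω_e)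
      + ρ * ω_e * Real.cos (θ₀ - s * τ * ω_e)
      + τ * v_p * ω_e * Real.cos (θ₀ - s * τ * ω_e))) :
    x 0 = ρ * Real.sin θ₀ ∧ y 0 = ρ * Real.cos θ₀
    ∧ (∀ τ, HasDerivAt x
        (-s * ω_e * y τ - v_p * Real.sin (Real.pi + θ₀ - s * ω_e * τ)) τ)
    ∧ (∀ τ, HasDerivAt y
        (s * ω_e * x τ + v_e - v_p * Real.cos (Real.pi + θ₀ - s * ω_e * τ)) τ) := by
  have hω' : ω_e ≠ 0 := ne_of_gt hω
  have hxf : x = fun τ => (1 / ω_e) * (-s * v_e + s * v_e * Real.cos (τ * ω_e)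
      + ρ * ω_e * Real.sin (θ₀ - s * τ * ω_e)
      + τ * v_p * ω_e * Real.sin (θ₀ - s * τ * ω_e)) := funext hx
  have hyf : y = fun τ => (1 / ω_e) * (v_e * Real.sin (τ * ω_e)
      + ρ * ω_e * Real.cos (θ₀ - s * τ * ω_e)
      + τ * v_p * ω_e * Real.cos (θ₀ - s * τ * ω_e)) := funext hy
  subst hxf hyf
  refine ⟨?_, ?_, ?_, ?_⟩
  · simp; field_simp
  · simp; field_simp
  · intro τ
    have hA : HasDerivAt (fun τ : ℝ => θ₀ - s * τ * ω_e) (-(s * ω_e)) τ := by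
      simpa using
        ((((hasDerivAt_id τ).const_mul s).mul_const ω_e).const_sub θ₀)
    have hsA := hA.sin
    have htv : HasDerivAt (fun τ : ℝ => τ * v_p * ω_e) (v_p * ω_e) τ := by
      simpa using ((hasDerivAt_id τ).mul_const v_p).mul_const ω_e
    have hcos := ((hasDerivAt_id τ).mul_const ω_e).cos
    have hX := ((((hasDerivAt_const τ (-s * v_e)).add
        (hcos.const_mul (s * v_e))).add
        (hsA.const_mul (ρ * ω_e))).add (htv.mul hsA)).const_mul (1 / ω_e)
    refine HasDerivAt.congr_deriv hX ?_
    have hπ : Real.pi + θ₀ - s * ω_e * τ = Real.pi + (θ₀ - s * τ * ω_e) := by ring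
    rw [hπ, Real.sin_add, Real.sin_pi, Real.cos_pi]
    rcases hs with rfl | rfl <;> simp only [id] <;> field_simp <;> ring
  · intro τ
    have hA : HasDerivAt (fun τ : ℝ => θ₀ - s * τ * ω_e) (-(s * ω_e)) τ := by
      simpa using
        ((((hasDerivAt_id τ).const_mul s).mul_const ω_e).const_sub θ₀)
    have hcA := hA.cos
    have htv : HasDerivAt (fun τ : ℝ => τ * v_p * ω_e) (v_p * ω_e) τ := by
      simpa using ((hasDerivAt_id τ).mul_const v_p).mul_const ω_e
    have hsin := ((hasDerivAt_id τ).mul_const ω_e).sin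
    have hY := (((hsin.const_mul v_e).add
        (hcA.const_mul (ρ * ω_e))).add (htv.mul hcA)).const_mul (1 / ω_e)
    refine HasDerivAt.congr_deriv hY ?_
    have hπ : Real.pi + θ₀ - s * ω_e * τ = Real.pi + (θ₀ - s * τ * ω_e) := by ring
    rw [hπ, Real.cos_add, Real.sin_pi, Real.cos_pi]
    rcases hs with rfl | rfl <;> simp only [id] <;> field_simp <;> ring
end

section
/- Fix constants ω_e, v_e, v_p > 0 and y₀ ∈ ℝ, and s ∈ {-1, 1}. Define ξ(τ) = ( s·(y₀ sin(τω_e) + v_e/ω_e - τ·v_p·sin(τω_e) - (v_e/ω_e)·cos(τω_e)), y₀ cos(τω_e) + (v_e/ω_e) sin(τω_e) - τ·v_p·cos(τω_e) ). Then ξ(0) = (0, y₀) and ξ satisfies the backward-time ODE ẋ(τ) = ω_e·y(τ)·u - v_p sin(u·ω_e·τ), ẏ(τ) = -ω_e·x(τ)·u + v_e - v_p cos(u·ω_e·τ) with constant evader control u = s and pursuer control u_p(τ) = s·ω_e·τ. -/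
open Real

theorem stmt9 (ω_e v_e v_p y₀ s : ℝ) (x y : ℝ → ℝ)
    (hω : 0 < ω_e) (hve : 0 < v_e) (hvp : 0 < v_p) (hs : s = 1 ∨ s = -1)
    (hx : ∀ τ, x τ = s * (y₀ * Real.sin (τ * ω_e) + v_e / ω_e
      - τ * v_p * Real.sin (τ * ω_e) - (v_e / ω_e) * Real.cos (τ * ω_e)))
    (hy : ∀ τ, y τ = y₀ * Real.cos (τ * ω_e)
      + (v_e / ω_e) * Real.sin (τ * ω_e) - τ * v_p * Real.cos (τ * ω_e)) :
    x 0 = 0 ∧ y 0 = y₀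
    ∧ (∀ τ, HasDerivAt x (ω_e * y τ * s - v_p * Real.sin (s * ω_e * τ)) τ)
    ∧ (∀ τ, HasDerivAt y (-ω_e * x τ * s + v_e - v_p * Real.cos (s * ω_e * τ)) τ) := by
  have hxf : x = fun τ => s * (y₀ * Real.sin (τ * ω_e) + v_e / ω_e
      - τ * v_p * Real.sin (τ * ω_e) - (v_e / ω_e) * Real.cos (τ * ω_e)) := funext hx
  have hyf : y = fun τ => y₀ * Real.cos (τ * ω_e)
      + (v_e / ω_e) * Real.sin (τ * ω_e) - τ * v_p * Real.cos (τ * ω_e) := funext hy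
  have hs2 : s * s = 1 := by rcases hs with h | h <;> simp [h]
  have hωne : ω_e ≠ 0 := hω.ne'
  have hssin : ∀ t : ℝ, Real.sin (s * t) = s * Real.sin t := by
    rcases hs with h | h <;> intro t <;> simp [h]
  have hscos : ∀ t : ℝ, Real.cos (s * t) = Real.cos t := by
    rcases hs with h | h <;> intro t <;> simp [h]
  refine ⟨by simp [hx], by simp [hy], ?_, ?_⟩
  · intro τ
    rw [hxf]
    have hlin : HasDerivAt (fun t : ℝ => t * ω_e) (1 * ω_e) τ :=
      (hasDerivAt_id τ).mul_const ω_e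
    have h :=
      (((((hlin.sin.const_mul y₀).add (hasDerivAt_const τ (v_e / ω_e))).sub
        (((hasDerivAt_id τ).mul_const v_p).mul hlin.sin)).sub
        (hlin.cos.const_mul (v_e / ω_e))).const_mul s)
    refine h.congr_deriv ?_
    rw [hy, mul_assoc s, hssin, id_eq]
    field_simp
    ring
  · intro τ
    rw [hyf]
    have hlin : HasDerivAt (fun t : ℝ => t * ω_e) (1 * ω_e) τ :=
      (hasDerivAt_id τ).mul_const ω_e
    have h :=
      (((hlin.cos.const_mul y₀).add (hlin.sin.const_mul (v_e / ω_e))).sub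
        (((hasDerivAt_id τ).mul_const v_p).mul hlin.cos))
    refine h.congr_deriv ?_
    rw [hx, mul_assoc s, hscos, id_eq]
    field_simp
    ring_nf
    rw [show s ^ 2 = 1 by nlinarith]
    ring
end

section
/- Fix v_r ∈ (0, 1/2] and define Γ(τ̃, ỹ₀) = (τ̃·v_r - ỹ₀)·sin τ̃ + 1 - cos τ̃. Then for every ỹ₀ ≤ 0 and every τ̃ ∈ (0, π], Γ(τ̃, ỹ₀) ≥ 0, with Γ(τ̃, ỹ₀) > 0 whenever τ̃ ∈ (0, π) and ỹ₀ < 0. -/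
open Real

noncomputable def Gam (v_r τ y₀ : ℝ) : ℝ :=
  (τ * v_r - y₀) * Real.sin τ + 1 - Real.cos τ

theorem stmt14 (v_r : ℝ) (hv : v_r ∈ Set.Ioc (0 : ℝ) (1 / 2)) :
    ∀ y₀ ≤ (0 : ℝ), ∀ τ ∈ Set.Ioc (0 : ℝ) Real.pi,
      0 ≤ Gam v_r τ y₀
      ∧ (τ < Real.pi → y₀ < 0 → 0 < Gam v_r τ y₀) := by
  obtain ⟨hv0, hv2⟩ := hv
  intro y₀ hy τ hτ
  obtain ⟨hτ0, hτπ⟩ := hτ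
  set s := Real.sin (τ / 2) with hs
  set c := Real.cos (τ / 2) with hc
  have hsin : Real.sin τ = 2 * s * c := by
    rw [hs, hc, ← Real.sin_two_mul]; ring_nf
  have hcos : Real.cos τ = 1 - 2 * s ^ 2 := by
    have h1 := Real.cos_two_mul' (τ / 2)
    have h2 := Real.sin_sq_add_cos_sq (τ / 2)
    have : (2:ℝ) * (τ / 2) = τ := by ring
    rw [this] at h1
    rw [hs]; linarith
  have hs0 : 0 < s := Real.sin_pos_of_pos_of_lt_pi (by linarith) (by linarith [Real.pi_pos])
  have hc0 : 0 ≤ c := Real.cos_nonneg_of_mem_Icc ⟨by linarith [Real.pi_pos], by linarith⟩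
  have hfac : Gam v_r τ y₀ = 2 * s * ((τ * v_r - y₀) * c + s) := by
    unfold Gam; rw [hsin, hcos]; ring
  have hA : 0 < τ * v_r - y₀ := by nlinarith
  constructor
  · rw [hfac]; positivity
  · intro hlt _
    have hc0' : 0 < c := Real.cos_pos_of_mem_Ioo ⟨by linarith [Real.pi_pos], by linarith⟩
    rw [hfac]; positivity
end
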